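/- arXiv:0906.2242 — 2 statements merged into one kernel-verified Lean document; each statement's English description precedes it below -/
import Mathlib

section
/- Let ρ ∈ ℝ and let M_ρ denote the (2m+1)×(2m) matrix [[−ρ I_m, B], [Bᵀ, −ρ I_m], [β e_mᵀ, 0]]. Then for every x, y ∈ ℝ^m, setting ψ = (P x; Q y) and z = (x; y), one has ‖Ã ψ − ρ ψ‖ = ‖M_ρ z‖. Consequently, if z_i = (x_i; y_i) is a unit right singular vector of M_ρ associated with its smallest singular value σ_min (so that ‖M_ρ z_i‖ = σ_min = min over unit z ∈ ℝ^{2m} of ‖M_ρ z‖), then ψ̃_i = (P x_i; Q y_i) is a unit vector of E satisfying ‖Ã ψ̃_i − ρ ψ̃_i‖ = σ_min = min over unit ψ ∈ E of ‖Ã ψ − ρ ψ‖. -/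
open Matrix

noncomputable def enormR {ι : Type*} [Fintype ι] (v : ι → ℝ) : ℝ :=
  Real.sqrt (∑ i, v i ^ 2)

def eLast (m : ℕ) : Fin m → ℝ := fun i => if (i : ℕ) = m - 1 then 1 else 0

def HarmonicPencil {m : ℕ} (B : Matrix (Fin m) (Fin m) ℝ) (β θ : ℝ)
    (s w : Fin m → ℝ) : Prop :=
  θ • B.mulVec w = (B * Bᵀ + β ^ 2 • vecMulVec (eLast m) (eLast m)).mulVec s ∧
  θ • Bᵀ.mulVec s = (Bᵀ * B).mulVec w

noncomputable def specNorm {m n : Type*} [Fintype m] [Fintype n] [DecidableEq n]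
    (A : Matrix m n ℝ) : ℝ :=
  ‖LinearMap.toContinuousLinearMap (Matrix.toEuclideanLin A)‖

noncomputable def sep {n : Type*} [Fintype n] [DecidableEq n] (a : ℝ) (G : Matrix n n ℝ) : ℝ :=
  sInf {r | ∃ x : n → ℝ, enormR x = 1 ∧ r = enormR ((a • (1 : Matrix n n ℝ) - G).mulVec x)}

noncomputable def sigmaMin {m n : Type*} [Fintype m] [Fintype n] (C : Matrix m n ℝ) : ℝ :=
  sSup {c | 0 ≤ c ∧ ∀ h, c * enormR h ≤ enormR (C.mulVec h)}

noncomputable def sinAngleVec {ι : Type*} [Fintype ι] (x y : ι → ℝ) : ℝ :=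
  Real.sqrt (1 - (x ⬝ᵥ y) ^ 2 / (enormR x ^ 2 * enormR y ^ 2))

noncomputable def toE {ι : Type*} (v : ι → ℝ) : EuclideanSpace ℝ ι :=
  (WithLp.equiv 2 (ι → ℝ)).symm v

noncomputable def ofE {ι : Type*} (v : EuclideanSpace ℝ ι) : ι → ℝ :=
  WithLp.equiv 2 (ι → ℝ) v

noncomputable def sinAngleSub {ι : Type*} [Fintype ι] (x : EuclideanSpace ℝ ι)
    (E : Submodule ℝ (EuclideanSpace ℝ ι)) : ℝ :=
  ‖x - (E.orthogonalProjectionOnto x : EuclideanSpace ℝ ι)‖ / ‖x‖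

def Atilde {M N : ℕ} (A : Matrix (Fin M) (Fin N) ℝ) :
    Matrix (Fin M ⊕ Fin N) (Fin M ⊕ Fin N) ℝ :=
  fromBlocks 0 A Aᵀ 0

def Btilde {m : ℕ} (B : Matrix (Fin m) (Fin m) ℝ) :
    Matrix (Fin m ⊕ Fin m) (Fin m ⊕ Fin m) ℝ :=
  fromBlocks 0 B Bᵀ 0

noncomputable def Ctilde {m : ℕ} (B : Matrix (Fin m) (Fin m) ℝ) (β : ℝ) :
    Matrix (Fin m ⊕ Fin m) (Fin m ⊕ Fin m) ℝ :=
  fromBlocks (B * Bᵀ + β ^ 2 • vecMulVec (eLast m) (eLast m)) 0 0 (Bᵀ * B)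

noncomputable def colSpanE {M N m : ℕ} (P : Matrix (Fin M) (Fin m) ℝ)
    (Q : Matrix (Fin N) (Fin m) ℝ) : Submodule ℝ (EuclideanSpace ℝ (Fin M ⊕ Fin N)) :=
  Submodule.span ℝ {z | ∃ x y : Fin m → ℝ, z = toE (Sum.elim (P.mulVec x) (Q.mulVec y))}

noncomputable def Mrho {m : ℕ} (B : Matrix (Fin m) (Fin m) ℝ) (β ρ : ℝ) :
    Matrix ((Fin m ⊕ Fin m) ⊕ Unit) (Fin m ⊕ Fin m) ℝ :=
  Matrix.fromRows
    (fromBlocks (-(ρ • (1 : Matrix (Fin m) (Fin m) ℝ))) B Bᵀ (-(ρ • 1)))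
    (Matrix.of fun (_ : Unit) j => Sum.elim (β • eLast m) (0 : Fin m → ℝ) j)

/-! Since `P` and `Q` have orthonormal columns, `(x; y) ↦ (P x; Q y)` is an isometry of `ℝ^{2m}`
onto `E`. The Lanczos relations turn `Ã ψ - ρ ψ` into `(P (B y - ρ x); Q (Bᵀ x - ρ y) + β xₘ q)`,
and as `q` is a unit vector orthogonal to the range of `Q`, its squared norm is
`‖B y - ρ x‖² + ‖Bᵀ x - ρ y‖² + (β xₘ)² = ‖M_ρ (x; y)‖²`. Hence the two minimisation problems
range over the same set of values. -/

lemma enormR_eq_sqrt_dotProduct {ι : Type*} [Fintype ι] (v : ι → ℝ) :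
    enormR v = √(v ⬝ᵥ v) := by
  simp only [enormR, dotProduct, sq]

lemma dotProduct_self_eq_one_of_enormR_eq_one {ι : Type*} [Fintype ι] {v : ι → ℝ}
    (hv : enormR v = 1) : v ⬝ᵥ v = 1 := by
  rw [enormR_eq_sqrt_dotProduct, Real.sqrt_eq_one] at hv
  exact hv

lemma dotProduct_mulVec_mulVec_of_transpose_mul_self_eq_one {ι κ : Type*} [Fintype ι]
    [Fintype κ] [DecidableEq κ] {P : Matrix ι κ ℝ} (hP : Pᵀ * P = 1) (u w : κ → ℝ) :
    (P *ᵥ u) ⬝ᵥ (P *ᵥ w) = u ⬝ᵥ w := by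
  rw [dotProduct_mulVec, ← vecMul_transpose, vecMul_vecMul, hP, vecMul_one]

lemma mulVec_dotProduct_eq_zero_of_transpose_mulVec_eq_zero {ι κ : Type*} [Fintype ι]
    [Fintype κ] {Q : Matrix ι κ ℝ} {q : ι → ℝ} (hQq : Qᵀ *ᵥ q = 0) (v : κ → ℝ) :
    (Q *ᵥ v) ⬝ᵥ q = 0 := by
  rw [dotProduct_comm, dotProduct_mulVec, ← mulVec_transpose, hQq, zero_dotProduct]

lemma add_smul_dotProduct_self_of_orthogonal {ι : Type*} [Fintype ι] {a b : ι → ℝ}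
    (hab : a ⬝ᵥ b = 0) (hb : b ⬝ᵥ b = 1) (c : ℝ) :
    (a + c • b) ⬝ᵥ (a + c • b) = a ⬝ᵥ a + c * c := by
  rw [dotProduct_comm] at hab
  simp only [add_dotProduct, dotProduct_add, smul_dotProduct, dotProduct_smul, smul_eq_mul,
    dotProduct_comm a b, hab, hb]
  ring

section Lanczos

variable {m M N : ℕ} {A : Matrix (Fin M) (Fin N) ℝ} {P : Matrix (Fin M) (Fin m) ℝ}
  {Q : Matrix (Fin N) (Fin m) ℝ} {B : Matrix (Fin m) (Fin m) ℝ} {β : ℝ} {q : Fin N → ℝ}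

lemma enormR_sumElim_mulVec (hP : Pᵀ * P = 1) (hQ : Qᵀ * Q = 1) (x y : Fin m → ℝ) :
    enormR (Sum.elim (P *ᵥ x) (Q *ᵥ y)) = enormR (Sum.elim x y) := by
  simp only [enormR_eq_sqrt_dotProduct, sumElim_dotProduct_sumElim,
    dotProduct_mulVec_mulVec_of_transpose_mul_self_eq_one hP,
    dotProduct_mulVec_mulVec_of_transpose_mul_self_eq_one hQ]

lemma Atilde_mulVec_sub_smul (hAQ : A * Q = P * B)
    (hAP : Aᵀ * P = Q * Bᵀ + β • vecMulVec q (eLast m)) (ρ : ℝ) (x y : Fin m → ℝ) :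
    Atilde A *ᵥ Sum.elim (P *ᵥ x) (Q *ᵥ y) - ρ • Sum.elim (P *ᵥ x) (Q *ᵥ y) =
      Sum.elim (P *ᵥ (B *ᵥ y - ρ • x)) (Q *ᵥ (Bᵀ *ᵥ x - ρ • y) + (β * (eLast m ⬝ᵥ x)) • q) := by
  have hAQy : A *ᵥ (Q *ᵥ y) = P *ᵥ (B *ᵥ y) := by
    rw [mulVec_mulVec, hAQ, ← mulVec_mulVec]
  have hAPx : Aᵀ *ᵥ (P *ᵥ x) = Q *ᵥ (Bᵀ *ᵥ x) + (β * (eLast m ⬝ᵥ x)) • q := by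
    rw [mulVec_mulVec, hAP, add_mulVec, smul_mulVec, vecMulVec_mulVec, ← mulVec_mulVec,
      op_smul_eq_smul, smul_smul]
  rw [Atilde, fromBlocks_mulVec]
  simp only [Sum.elim_comp_inl, Sum.elim_comp_inr, zero_mulVec, zero_add, add_zero, hAQy, hAPx,
    mulVec_sub, mulVec_smul]
  ext (i | i)
  · simp only [Pi.sub_apply, Pi.smul_apply, Sum.elim_inl]
  · simp only [Pi.sub_apply, Pi.add_apply, Pi.smul_apply, Sum.elim_inr, smul_eq_mul]
    ring

lemma Mrho_mulVec_sumElim (ρ : ℝ) (x y : Fin m → ℝ) :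
    Mrho B β ρ *ᵥ Sum.elim x y =
      Sum.elim (Sum.elim (B *ᵥ y - ρ • x) (Bᵀ *ᵥ x - ρ • y)) (fun _ => β * (eLast m ⬝ᵥ x)) := by
  rw [Mrho, fromRows_mulVec, fromBlocks_mulVec]
  simp only [Sum.elim_comp_inl, Sum.elim_comp_inr, neg_mulVec, smul_mulVec, one_mulVec]
  ext ((i | i) | i)
  · simp only [Sum.elim_inl, Pi.add_apply, Pi.neg_apply, Pi.smul_apply, Pi.sub_apply]; ring
  · simp only [Sum.elim_inl, Sum.elim_inr, Pi.add_apply, Pi.neg_apply, Pi.smul_apply,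
      Pi.sub_apply]; ring
  · simp [mulVec, dotProduct, Fintype.sum_sum_type, Finset.mul_sum, mul_assoc]

lemma enormR_Atilde_residual_eq_enormR_Mrho_mulVec (hP : Pᵀ * P = 1) (hQ : Qᵀ * Q = 1)
    (hq : enormR q = 1) (hQq : Qᵀ *ᵥ q = 0) (hAQ : A * Q = P * B)
    (hAP : Aᵀ * P = Q * Bᵀ + β • vecMulVec q (eLast m)) (ρ : ℝ) (x y : Fin m → ℝ) :
    enormR (Atilde A *ᵥ Sum.elim (P *ᵥ x) (Q *ᵥ y) - ρ • Sum.elim (P *ᵥ x) (Q *ᵥ y)) =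
      enormR (Mrho B β ρ *ᵥ Sum.elim x y) := by
  rw [Atilde_mulVec_sub_smul hAQ hAP, Mrho_mulVec_sumElim, enormR_eq_sqrt_dotProduct,
    enormR_eq_sqrt_dotProduct]
  simp only [sumElim_dotProduct_sumElim,
    add_smul_dotProduct_self_of_orthogonal
      (mulVec_dotProduct_eq_zero_of_transpose_mulVec_eq_zero hQq _)
      (dotProduct_self_eq_one_of_enormR_eq_one hq),
    dotProduct_mulVec_mulVec_of_transpose_mul_self_eq_one hP,
    dotProduct_mulVec_mulVec_of_transpose_mul_self_eq_one hQ]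
  simp only [dotProduct, Finset.univ_unique, Finset.sum_singleton]
  ring_nf

end Lanczos

theorem stmt8_general (m M N : ℕ)
    (A : Matrix (Fin M) (Fin N) ℝ)
    (P : Matrix (Fin M) (Fin m) ℝ) (Q : Matrix (Fin N) (Fin m) ℝ)
    (hP : Pᵀ * P = 1) (hQ : Qᵀ * Q = 1)
    (B : Matrix (Fin m) (Fin m) ℝ) (β : ℝ) (q : Fin N → ℝ)
    (hq : enormR q = 1) (hQq : Qᵀ.mulVec q = 0)
    (hAQ : A * Q = P * B)
    (hAP : Aᵀ * P = Q * Bᵀ + β • vecMulVec q (eLast m))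
    (ρ : ℝ) :
    (∀ x y : Fin m → ℝ,
      enormR ((Atilde A).mulVec (Sum.elim (P.mulVec x) (Q.mulVec y))
          - ρ • Sum.elim (P.mulVec x) (Q.mulVec y))
        = enormR ((Mrho B β ρ).mulVec (Sum.elim x y))) ∧
    (∀ xi yi : Fin m → ℝ,
      enormR (Sum.elim xi yi) = 1 →
      enormR ((Mrho B β ρ).mulVec (Sum.elim xi yi))
        = sInf {r | ∃ z : Fin m ⊕ Fin m → ℝ, enormR z = 1 ∧
            r = enormR ((Mrho B β ρ).mulVec z)} →
      enormR (Sum.elim (P.mulVec xi) (Q.mulVec yi)) = 1 ∧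
      (∃ x y : Fin m → ℝ,
        Sum.elim (P.mulVec xi) (Q.mulVec yi) = Sum.elim (P.mulVec x) (Q.mulVec y)) ∧
      enormR ((Atilde A).mulVec (Sum.elim (P.mulVec xi) (Q.mulVec yi))
          - ρ • Sum.elim (P.mulVec xi) (Q.mulVec yi))
        = enormR ((Mrho B β ρ).mulVec (Sum.elim xi yi)) ∧
      enormR ((Atilde A).mulVec (Sum.elim (P.mulVec xi) (Q.mulVec yi))
          - ρ • Sum.elim (P.mulVec xi) (Q.mulVec yi))
        = sInf {r | ∃ ψ : Fin M ⊕ Fin N → ℝ,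
            (∃ x y : Fin m → ℝ, ψ = Sum.elim (P.mulVec x) (Q.mulVec y)) ∧
            enormR ψ = 1 ∧ r = enormR ((Atilde A).mulVec ψ - ρ • ψ)}) := by
  have residual := enormR_Atilde_residual_eq_enormR_Mrho_mulVec hP hQ hq hQq hAQ hAP ρ
  have isometry := enormR_sumElim_mulVec hP hQ
  have same_values :
      {r | ∃ ψ : Fin M ⊕ Fin N → ℝ,
        (∃ x y : Fin m → ℝ, ψ = Sum.elim (P *ᵥ x) (Q *ᵥ y)) ∧
        enormR ψ = 1 ∧ r = enormR (Atilde A *ᵥ ψ - ρ • ψ)} =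
      {r | ∃ z : Fin m ⊕ Fin m → ℝ, enormR z = 1 ∧ r = enormR (Mrho B β ρ *ᵥ z)} := by
    ext r
    constructor
    · rintro ⟨_, ⟨x, y, rfl⟩, hunit, rfl⟩
      exact ⟨Sum.elim x y, isometry x y ▸ hunit, residual x y⟩
    · rintro ⟨z, hunit, rfl⟩
      rw [← Sum.elim_comp_inl_inr z] at hunit ⊢
      exact ⟨_, ⟨_, _, rfl⟩, (isometry _ _).trans hunit, (residual _ _).symm⟩
  refine ⟨residual, fun xi yi hunit hmin => ⟨(isometry xi yi).trans hunit, ⟨xi, yi, rfl⟩,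
    residual xi yi, ?_⟩⟩
  rw [same_values, residual, hmin]

theorem stmt8 (m M N : ℕ) (hm : 0 < m)
    (A : Matrix (Fin M) (Fin N) ℝ)
    (P : Matrix (Fin M) (Fin m) ℝ) (Q : Matrix (Fin N) (Fin m) ℝ)
    (hP : Pᵀ * P = 1) (hQ : Qᵀ * Q = 1)
    (B : Matrix (Fin m) (Fin m) ℝ) (β : ℝ) (q : Fin N → ℝ)
    (hq : enormR q = 1) (hQq : Qᵀ.mulVec q = 0)
    (hAQ : A * Q = P * B)
    (hAP : Aᵀ * P = Q * Bᵀ + β • vecMulVec q (eLast m))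
    (ρ : ℝ) :
    (∀ x y : Fin m → ℝ,
      enormR ((Atilde A).mulVec (Sum.elim (P.mulVec x) (Q.mulVec y))
          - ρ • Sum.elim (P.mulVec x) (Q.mulVec y))
        = enormR ((Mrho B β ρ).mulVec (Sum.elim x y))) ∧
    (∀ xi yi : Fin m → ℝ,
      enormR (Sum.elim xi yi) = 1 →
      enormR ((Mrho B β ρ).mulVec (Sum.elim xi yi))
        = sInf {r | ∃ z : Fin m ⊕ Fin m → ℝ, enormR z = 1 ∧
            r = enormR ((Mrho B β ρ).mulVec z)} →
      enormR (Sum.elim (P.mulVec xi) (Q.mulVec yi)) = 1 ∧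
      (∃ x y : Fin m → ℝ,
        Sum.elim (P.mulVec xi) (Q.mulVec yi) = Sum.elim (P.mulVec x) (Q.mulVec y)) ∧
      enormR ((Atilde A).mulVec (Sum.elim (P.mulVec xi) (Q.mulVec yi))
          - ρ • Sum.elim (P.mulVec xi) (Q.mulVec yi))
        = enormR ((Mrho B β ρ).mulVec (Sum.elim xi yi)) ∧
      enormR ((Atilde A).mulVec (Sum.elim (P.mulVec xi) (Q.mulVec yi))
          - ρ • Sum.elim (P.mulVec xi) (Q.mulVec yi))
        = sInf {r | ∃ ψ : Fin M ⊕ Fin N → ℝ,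
            (∃ x y : Fin m → ℝ, ψ = Sum.elim (P.mulVec x) (Q.mulVec y)) ∧
            enormR ψ = 1 ∧ r = enormR ((Atilde A).mulVec ψ - ρ • ψ)}) :=
  stmt8_general m M N A P Q hP hQ B β q hq hQq hAQ hAP ρ
end

section
/- Let l be a positive integer, Y and X real m×l matrices, and g ∈ ℝ^l. Then ‖Bᵀ Y g‖² + β² (e_mᵀ Y g)² + ‖B X g‖² = ‖Aᵀ (P Y g)‖² + ‖A (Q X g)‖². -/
open Matrix

/-!
Since `A Q = P B` and `P` is an isometry, `‖A Q x‖ = ‖B x‖`. On the other side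
`Aᵀ P y = Q Bᵀ y + β (e_mᵀ y) q`, and the two summands are orthogonal because `Qᵀ q = 0`,
so Pythagoras and `‖q‖ = 1` give `‖Aᵀ P y‖² = ‖Bᵀ y‖² + β² (e_mᵀ y)²`.
-/

section enormR

variable {ι κ : Type*} [Fintype ι] [Fintype κ]

lemma enormR_sq (v : ι → ℝ) : enormR v ^ 2 = v ⬝ᵥ v := by
  rw [enormR, Real.sq_sqrt (by positivity)]
  simp only [dotProduct, sq]

lemma enormR_mulVec_sq_of_transpose_mul_self [DecidableEq ι] {U : Matrix κ ι ℝ}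
    (hU : Uᵀ * U = 1) (v : ι → ℝ) : enormR (U *ᵥ v) ^ 2 = enormR v ^ 2 := by
  rw [enormR_sq, enormR_sq, dotProduct_mulVec, ← mulVec_transpose, mulVec_mulVec, hU,
    one_mulVec]

lemma enormR_add_sq_of_dotProduct_eq_zero {u w : ι → ℝ} (h : u ⬝ᵥ w = 0) :
    enormR (u + w) ^ 2 = enormR u ^ 2 + enormR w ^ 2 := by
  rw [enormR_sq, enormR_sq, enormR_sq, dotProduct_add, add_dotProduct, add_dotProduct, h,
    dotProduct_comm w u, h, add_zero, zero_add]

lemma enormR_smul_sq (c : ℝ) (v : ι → ℝ) : enormR (c • v) ^ 2 = c ^ 2 * enormR v ^ 2 := by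
  rw [enormR_sq, enormR_sq, dotProduct_smul, smul_dotProduct, smul_eq_mul, smul_eq_mul, sq,
    mul_assoc]

end enormR

theorem stmt12_general (m M N l : ℕ)
    (A : Matrix (Fin M) (Fin N) ℝ)
    (P : Matrix (Fin M) (Fin m) ℝ) (Q : Matrix (Fin N) (Fin m) ℝ)
    (hP : Pᵀ * P = 1) (hQ : Qᵀ * Q = 1)
    (B : Matrix (Fin m) (Fin m) ℝ) (β : ℝ) (q : Fin N → ℝ)
    (hq : enormR q = 1) (hQq : Qᵀ.mulVec q = 0)
    (hAQ : A * Q = P * B)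
    (hAP : Aᵀ * P = Q * Bᵀ + β • vecMulVec q (eLast m))
    (Y X : Matrix (Fin m) (Fin l) ℝ) (g : Fin l → ℝ) :
    enormR (Bᵀ.mulVec (Y.mulVec g)) ^ 2 + β ^ 2 * (eLast m ⬝ᵥ Y.mulVec g) ^ 2
      + enormR (B.mulVec (X.mulVec g)) ^ 2
    = enormR (Aᵀ.mulVec (P.mulVec (Y.mulVec g))) ^ 2
      + enormR (A.mulVec (Q.mulVec (X.mulVec g))) ^ 2 := by
  set y := Y *ᵥ g
  set x := X *ᵥ g
  have hAQx : A *ᵥ (Q *ᵥ x) = P *ᵥ (B *ᵥ x) := by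
    rw [mulVec_mulVec, hAQ, ← mulVec_mulVec]
  have hAPy : Aᵀ *ᵥ (P *ᵥ y) = Q *ᵥ (Bᵀ *ᵥ y) + (β * (eLast m ⬝ᵥ y)) • q := by
    rw [mulVec_mulVec, hAP, add_mulVec, ← mulVec_mulVec, smul_mulVec, vecMulVec_mulVec,
      op_smul_eq_smul, smul_smul]
  have horth : Q *ᵥ (Bᵀ *ᵥ y) ⬝ᵥ (β * (eLast m ⬝ᵥ y)) • q = 0 := by
    rw [dotProduct_smul, dotProduct_comm (Q *ᵥ _), dotProduct_mulVec q, ← mulVec_transpose,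
      hQq, zero_dotProduct, smul_zero]
  rw [hAQx, hAPy, enormR_add_sq_of_dotProduct_eq_zero horth, enormR_smul_sq, hq,
    enormR_mulVec_sq_of_transpose_mul_self hP, enormR_mulVec_sq_of_transpose_mul_self hQ]
  ring

theorem stmt12 (m M N l : ℕ) (hm : 0 < m) (hl : 0 < l)
    (A : Matrix (Fin M) (Fin N) ℝ)
    (P : Matrix (Fin M) (Fin m) ℝ) (Q : Matrix (Fin N) (Fin m) ℝ)
    (hP : Pᵀ * P = 1) (hQ : Qᵀ * Q = 1)
    (B : Matrix (Fin m) (Fin m) ℝ) (β : ℝ) (q : Fin N → ℝ)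
    (hq : enormR q = 1) (hQq : Qᵀ.mulVec q = 0)
    (hAQ : A * Q = P * B)
    (hAP : Aᵀ * P = Q * Bᵀ + β • vecMulVec q (eLast m))
    (Y X : Matrix (Fin m) (Fin l) ℝ) (g : Fin l → ℝ) :
    enormR (Bᵀ.mulVec (Y.mulVec g)) ^ 2 + β ^ 2 * (eLast m ⬝ᵥ Y.mulVec g) ^ 2
      + enormR (B.mulVec (X.mulVec g)) ^ 2
    = enormR (Aᵀ.mulVec (P.mulVec (Y.mulVec g))) ^ 2
      + enormR (A.mulVec (Q.mulVec (X.mulVec g))) ^ 2 :=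
  stmt12_general m M N l A P Q hP hQ B β q hq hQq hAQ hAP Y X g
end
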